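/- Let α > −1/2, let m ≥ 1 be a natural number, let p₁ < p₂ < ⋯ < p_m be real numbers with P = {p₁, …, p_m}, and let u be twice differentiable on ℝ ∖ P and satisfy u''(x) = 2u(x)³ + x·u(x) − α there, with alternating simple poles starting with residue +1: (x − p_j)·u(x) → (−1)^{j+1} as x → p_j for each j. Suppose f(x) := 2u(x)² − 2u'(x) + x satisfies: f(x) → −∞ as x → −∞; f(x) → +∞ as x → +∞; f(x) → +∞ as x → p_j for each odd index j; and f(x)/(x − p_j) → −(2α+1) as x → p_j for each even index j. Then the zeros of f in ℝ ∖ P are distributed as follows: exactly one zero in (−∞, p₁); no zeros in (p_{2k−1}, p_{2k}) for each k with 2k ≤ m; exactly one zero in (p_{2k}, p_{2k+1}) for each k with 2k < m; and, in (p_m, +∞), no zeros if m is odd and exactly one zero if m is even. In particular f has exactly ⌊m/2⌋ + 1 zeros in ℝ ∖ P, and at each such zero z one has f'(z) = 2α + 1. -/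

import Mathlib

open Filter Topology Set

/-- The auxiliary function `f(x) = 2 u(x)^2 - 2 u'(x) + x` appearing in the
Bäcklund transformation for Painlevé II. -/
def piiF (u u' : ℝ → ℝ) : ℝ → ℝ := fun x => 2 * (u x) ^ 2 - 2 * u' x + x

/-- The pole set `P = {p 1, …, p m}` of a solution with `m` real poles,
indexed by `1, …, m`. -/
def poleSet (m : ℕ) (p : ℕ → ℝ) : Set ℝ := {x : ℝ | ∃ j, 1 ≤ j ∧ j ≤ m ∧ p j = x}

/-!
Off the poles, `f = piiF u u'` satisfies the Riccati equation `f' = -2 u f + (2α + 1)`, so at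
every zero `f' = 2α + 1 > 0`: `f` can only cross zero upwards. By a continuous induction, on an
interval free of poles `f` therefore stays positive once it is nonnegative. Hence on each
component of `ℝ ∖ P` it has at most one zero, none if it is positive near the left end, and
exactly one if it is negative near the left end and positive near the right end. The limit
hypotheses make `f` negative near `-∞` and just right of each even pole, and positive around each
odd pole and near `+∞`, so the `⌊m/2⌋ + 1` even-indexed components carry one zero each and the
odd-indexed ones none.
-/

lemma hasDerivAt_piiF {u u' u'' : ℝ → ℝ} {α x : ℝ} (hu : HasDerivAt u (u' x) x)
    (hu' : HasDerivAt u' (u'' x) x) (hPII : u'' x = 2 * u x ^ 3 + x * u x - α) :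
    HasDerivAt (piiF u u') (-2 * u x * piiF u u' x + (2 * α + 1)) x := by
  refine ((((hu.pow 2).const_mul 2).sub (hu'.const_mul 2)).add (hasDerivAt_id x)).congr_deriv ?_
  simp only [piiF, hPII]
  push_cast
  ring

lemma eventually_neg_nhdsGT_of_tendsto_div {f : ℝ → ℝ} {a L : ℝ}
    (h : Tendsto (fun x => f x / (x - a)) (𝓝[≠] a) (𝓝 L)) (hL : L < 0) :
    ∀ᶠ x in 𝓝[>] a, f x < 0 := by
  filter_upwards [(h.mono_left (nhdsGT_le_nhdsNE a)).eventually (eventually_lt_nhds hL),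
    self_mem_nhdsWithin] with x hx hax
  simpa using (div_lt_iff₀ (sub_pos.2 hax)).1 hx

section Upcrossing

variable {f : ℝ → ℝ} {s : Set ℝ} {a b c z : ℝ}

lemma HasDerivAt.eventually_neg_nhdsLT_of_eq_zero (hf : HasDerivAt f c z) (hc : 0 < c)
    (h0 : f z = 0) : ∀ᶠ x in 𝓝[<] z, f x < 0 := by
  filter_upwards [((hasDerivAt_iff_tendsto_slope.1 hf).mono_left (nhdsLT_le_nhdsNE z)).eventually
    (eventually_gt_nhds hc), self_mem_nhdsWithin] with x hslope hx
  exact neg_of_slope_pos hx hslope h0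

lemma HasDerivAt.eventually_pos_nhdsGT_of_eq_zero (hf : HasDerivAt f c z) (hc : 0 < c)
    (h0 : f z = 0) : ∀ᶠ x in 𝓝[>] z, 0 < f x := by
  filter_upwards [((hasDerivAt_iff_tendsto_slope.1 hf).mono_left (nhdsGT_le_nhdsNE z)).eventually
    (eventually_gt_nhds hc), self_mem_nhdsWithin] with x hslope hx
  exact pos_of_slope_pos hx hslope h0

def CrossesZeroUpOn (f : ℝ → ℝ) (s : Set ℝ) : Prop :=
  ContinuousOn f s ∧ ∀ z ∈ s, f z = 0 → ∃ c, 0 < c ∧ HasDerivAt f c z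

namespace CrossesZeroUpOn

lemma mono {t : Set ℝ} (hf : CrossesZeroUpOn f s) (hts : t ⊆ s) : CrossesZeroUpOn f t :=
  ⟨hf.1.mono hts, fun z hz => hf.2 z (hts hz)⟩

lemma pos_of_nonneg (hf : CrossesZeroUpOn f (Icc a b)) (hab : a < b) (ha : 0 ≤ f a) :
    0 < f b := by
  have hnonneg : Icc a b ⊆ {x | 0 ≤ f x} := by
    refine IsClosed.Icc_subset_of_forall_mem_nhdsWithin ?_ ha ?_
    · rw [inter_comm]
      exact hf.1.preimage_isClosed_of_isClosed isClosed_Icc isClosed_Ici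
    rintro x ⟨hx, hxI⟩
    rcases (show 0 ≤ f x from hx).eq_or_lt with h0 | hpos
    · obtain ⟨c, hc, hd⟩ := hf.2 x (Ico_subset_Icc_self hxI) h0.symm
      exact (hd.eventually_pos_nhdsGT_of_eq_zero hc h0.symm).mono fun _ => le_of_lt
    · have hIcc : Icc a b ∈ 𝓝[>] x :=
        ordConnected_Icc.mem_nhdsGT (Ico_subset_Icc_self hxI) (right_mem_Icc.2 hab.le) hxI.2
      exact nhdsWithin_le_of_mem hIcc
        (((hf.1 x (Ico_subset_Icc_self hxI)).eventually (eventually_gt_nhds hpos)).mono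
          fun _ => le_of_lt)
  refine (hnonneg (right_mem_Icc.2 hab.le)).lt_of_ne fun h0 => ?_
  obtain ⟨c, hc, hd⟩ := hf.2 b (right_mem_Icc.2 hab.le) h0.symm
  obtain ⟨x, hx, hxI⟩ :=
    ((hd.eventually_neg_nhdsLT_of_eq_zero hc h0.symm).and (Ioo_mem_nhdsLT hab)).exists
  exact (hnonneg (Ioo_subset_Icc_self hxI)).not_gt hx

lemma subsingleton_zeros (hf : CrossesZeroUpOn f s) (hs : s.OrdConnected) :
    {x ∈ s | f x = 0}.Subsingleton := by
  have hpos : ∀ x ∈ s, ∀ y ∈ s, f x = 0 → x < y → 0 < f y := fun x hx y hy h0 hxy =>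
    (hf.mono (hs.out hx hy)).pos_of_nonneg hxy h0.ge
  rintro x ⟨hx, hx0⟩ y ⟨hy, hy0⟩
  rcases lt_trichotomy x y with h | h | h
  · exact absurd hy0 (hpos x hx y hy hx0 h).ne'
  · exact h
  · exact absurd hx0 (hpos y hy x hx hy0 h).ne'

lemma exists_unique_zero (hf : CrossesZeroUpOn f s) (hs : s.OrdConnected) (ha : a ∈ s)
    (hb : b ∈ s) (hfa : f a < 0) (hfb : 0 < f b) :
    ∃ z ∈ s, f z = 0 ∧ ∀ w ∈ s, f w = 0 → w = z := by
  obtain ⟨z, hzs, hz0⟩ := hs.isPreconnected.intermediate_value ha hb hf.1 ⟨hfa.le, hfb.le⟩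
  exact ⟨z, hzs, hz0, fun w hw hw0 => hf.subsingleton_zeros hs ⟨hw, hw0⟩ ⟨hzs, hz0⟩⟩

lemma pos_of_eventually_pos (hf : CrossesZeroUpOn f (Ioc a b)) (hab : a < b)
    (hpos : ∀ᶠ x in 𝓝[>] a, 0 < f x) : 0 < f b := by
  obtain ⟨x, hx, hxI⟩ := (hpos.and (Ioo_mem_nhdsGT hab)).exists
  exact (hf.mono fun y hy => ⟨hxI.1.trans_le hy.1, hy.2⟩).pos_of_nonneg hxI.2 hx.le

end CrossesZeroUpOn

end Upcrossing

lemma exists_mem_Ico_of_le_of_lt {α : Type*} [LinearOrder α] {p : ℕ → α} {x : α} {a b : ℕ}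
    (hab : a ≤ b) (ha : p a ≤ x) (hb : x < p b) :
    ∃ j, a ≤ j ∧ j < b ∧ x ∈ Ico (p j) (p (j + 1)) := by
  induction b, hab using Nat.le_induction with
  | base => exact absurd hb ha.not_gt
  | succ b hab ih =>
    by_cases hxb : x < p b
    · obtain ⟨j, haj, hjb, hj⟩ := ih hxb
      exact ⟨j, haj, hjb.trans b.lt_succ_self, hj⟩
    · exact ⟨b, hab, b.lt_succ_self, not_lt.1 hxb, hb⟩

/-- The `j`-th component `(p j, p (j + 1))` of `ℝ ∖ {p 1, …, p m}`, for `j ≤ m`, where `p 0`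
stands for `-∞` and `p (m + 1)` for `+∞`. -/
def gap (m : ℕ) (p : ℕ → ℝ) (j : ℕ) : Set ℝ :=
  {x | (j = 0 ∨ p j < x) ∧ (m ≤ j ∨ x < p (j + 1))}

section Gap

variable {m j : ℕ} {p : ℕ → ℝ} {x : ℝ}

lemma ordConnected_gap : (gap m p j).OrdConnected :=
  ⟨fun _ ⟨hx, _⟩ _ ⟨_, hy⟩ _ ⟨hxz, hzy⟩ =>
    ⟨hx.imp_right (·.trans_le hxz), hy.imp_right (hzy.trans_lt ·)⟩⟩

lemma gap_zero (hm : 1 ≤ m) : gap m p 0 = Iio (p 1) := by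
  ext x
  simp [gap, Nat.one_le_iff_ne_zero.1 hm]

lemma gap_of_lt (hj : 1 ≤ j) (hjm : j < m) : gap m p j = Ioo (p j) (p (j + 1)) := by
  ext x
  simp [gap, Nat.one_le_iff_ne_zero.1 hj, hjm]

lemma gap_self (hm : 1 ≤ m) : gap m p m = Ioi (p m) := by
  ext x
  simp [gap, Nat.one_le_iff_ne_zero.1 hm]

lemma gap_subset_compl_poleSet (hmono : MonotoneOn p (Icc 1 m)) (hj : j ≤ m) :
    gap m p j ⊆ (poleSet m p)ᶜ := by
  rintro _ ⟨hl, hr⟩ ⟨i, hi1, him, rfl⟩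
  rcases le_or_gt i j with hij | hij
  · rcases hl with rfl | hl
    · omega
    exact (hmono ⟨hi1, him⟩ ⟨hi1.trans hij, hj⟩ hij).not_gt hl
  · rcases hr with hr | hr
    · omega
    exact (hmono ⟨by omega, by omega⟩ ⟨hi1, him⟩ hij).not_gt hr

lemma exists_mem_gap (hx : x ∉ poleSet m p) : ∃ j ≤ m, x ∈ gap m p j := by
  by_cases hxm : p m < x
  · exact ⟨m, le_rfl, Or.inr hxm, Or.inl le_rfl⟩
  rcases Nat.eq_zero_or_pos m with rfl | hm
  · exact ⟨0, le_rfl, Or.inl rfl, Or.inl le_rfl⟩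
  by_cases hx1 : x < p 1
  · exact ⟨0, Nat.zero_le m, Or.inl rfl, Or.inr hx1⟩
  have hne : ∀ j, 1 ≤ j → j ≤ m → p j ≠ x := fun j h1 h2 h => hx ⟨j, h1, h2, h⟩
  obtain ⟨j, hj1, hjm, hxj, hxj1⟩ := exists_mem_Ico_of_le_of_lt hm (not_lt.1 hx1)
    ((not_lt.1 hxm).lt_of_ne (hne m hm le_rfl).symm)
  exact ⟨j, hjm.le, Or.inr (hxj.lt_of_ne (hne j hj1 hjm.le)), Or.inr hxj1⟩

lemma eq_of_mem_gap {i : ℕ} (hmono : MonotoneOn p (Icc 1 m)) (hi : i ≤ m) (hj : j ≤ m)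
    (hxi : x ∈ gap m p i) (hxj : x ∈ gap m p j) : i = j := by
  have hlt : ∀ i j, i < j → j ≤ m → x ∈ gap m p i → x ∈ gap m p j → False := by
    rintro i j hij hj ⟨-, hi | hi⟩ ⟨hj' | hj', -⟩ <;> try omega
    exact (hmono ⟨by omega, by omega⟩ ⟨by omega, hj⟩ hij).not_gt (hj'.trans hi)
  rcases lt_trichotomy i j with h | h | h
  · exact (hlt i j h hj hxi hxj).elim
  · exact h
  · exact (hlt j i h hi hxj hxi).elim

lemma gap_mem_atBot : gap m p 0 ∈ atBot := by
  filter_upwards [eventually_lt_atBot (p 1)] with x hx using ⟨Or.inl rfl, Or.inr hx⟩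

lemma gap_mem_atTop : gap m p m ∈ atTop := by
  filter_upwards [eventually_gt_atTop (p m)] with x hx using ⟨Or.inr hx, Or.inl le_rfl⟩

lemma gap_mem_nhdsGT (hmono : StrictMonoOn p (Icc 1 m)) (hj1 : 1 ≤ j) (hj : j ≤ m) :
    gap m p j ∈ 𝓝[>] p j := by
  rcases hj.lt_or_eq with hjm | rfl
  · filter_upwards [Ioo_mem_nhdsGT (hmono ⟨hj1, hj⟩ ⟨by omega, hjm⟩ j.lt_succ_self)]
      with x hx using ⟨Or.inr hx.1, Or.inr hx.2⟩
  · filter_upwards [self_mem_nhdsWithin] with x hx using ⟨Or.inr hx, Or.inl le_rfl⟩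

lemma gap_mem_nhdsLT (hmono : StrictMonoOn p (Icc 1 m)) (hjm : j < m) :
    gap m p j ∈ 𝓝[<] p (j + 1) := by
  rcases Nat.eq_zero_or_pos j with rfl | hj
  · filter_upwards [self_mem_nhdsWithin] with x hx using ⟨Or.inl rfl, Or.inr hx⟩
  · filter_upwards [Ioo_mem_nhdsLT (hmono ⟨hj, hjm.le⟩ ⟨by omega, hjm⟩ j.lt_succ_self)]
      with x hx using ⟨Or.inr hx.1, Or.inr hx.2⟩

end Gap

section GapZeros

variable {f : ℝ → ℝ} {m j : ℕ} {p : ℕ → ℝ}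

lemma pos_of_mem_gap (hmono : MonotoneOn p (Icc 1 m)) (hf : CrossesZeroUpOn f (poleSet m p)ᶜ)
    (hj1 : 1 ≤ j) (hj : j ≤ m) (hpos : ∀ᶠ x in 𝓝[>] p j, 0 < f x) :
    ∀ w ∈ gap m p j, 0 < f w := by
  intro w hw
  have hIoc : Ioc (p j) w ⊆ gap m p j := fun x hx =>
    ⟨Or.inr hx.1, hw.2.imp_right hx.2.trans_lt⟩
  exact (hf.mono (hIoc.trans (gap_subset_compl_poleSet hmono hj))).pos_of_eventually_pos
    (hw.1.resolve_left (by omega)) hpos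

lemma exists_unique_zero_mem_gap (hmono : StrictMonoOn p (Icc 1 m))
    (hf : CrossesZeroUpOn f (poleSet m p)ᶜ) (hbot : Tendsto f atBot atBot)
    (htop : Tendsto f atTop atTop)
    (hpos : ∀ j, 1 ≤ j → j ≤ m → Odd j → ∀ᶠ x in 𝓝[≠] p j, 0 < f x)
    (hneg : ∀ j, 1 ≤ j → j ≤ m → Even j → ∀ᶠ x in 𝓝[>] p j, f x < 0)
    (hj : j ≤ m) (hje : Even j) :
    ∃ z ∈ gap m p j, f z = 0 ∧ ∀ w ∈ gap m p j, f w = 0 → w = z := by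
  obtain ⟨a, hfa, ha⟩ : ∃ a, f a < 0 ∧ a ∈ gap m p j := by
    rcases Nat.eq_zero_or_pos j with rfl | hj1
    · exact ((hbot.eventually_lt_atBot 0).and gap_mem_atBot).exists
    · exact ((hneg j hj1 hj hje).and (gap_mem_nhdsGT hmono hj1 hj)).exists
  obtain ⟨b, hfb, hb⟩ : ∃ b, 0 < f b ∧ b ∈ gap m p j := by
    rcases hj.lt_or_eq with hjm | rfl
    · have hpos_left := (hpos (j + 1) (by omega) hjm hje.add_one).filter_mono
        (nhdsLT_le_nhdsNE _)
      exact (hpos_left.and (gap_mem_nhdsLT hmono hjm)).exists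
    · exact ((htop.eventually_gt_atTop 0).and gap_mem_atTop).exists
  exact (hf.mono (gap_subset_compl_poleSet hmono.monotoneOn hj)).exists_unique_zero
    ordConnected_gap ha hb hfa hfb

lemma ncard_setOf_zero_eq (hmono : MonotoneOn p (Icc 1 m))
    (hodd : ∀ j ≤ m, Odd j → ∀ w ∈ gap m p j, f w ≠ 0)
    (heven : ∀ j ≤ m, Even j →
      ∃ z ∈ gap m p j, f z = 0 ∧ ∀ w ∈ gap m p j, f w = 0 → w = z) :
    {x | x ∉ poleSet m p ∧ f x = 0}.ncard = m / 2 + 1 := by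
  choose g hg_mem hg_zero hg_unique using
    fun k (hk : k < m / 2 + 1) => heven (2 * k) (by omega) (even_two_mul k)
  refine ncard_eq_of_bijective g ?_
    (fun k hk => ⟨gap_subset_compl_poleSet hmono (by omega) (hg_mem k hk), hg_zero k hk⟩)
    fun i j hi hj hij => ?_
  · rintro x ⟨hx, hx0⟩
    obtain ⟨j, hjm, hxj⟩ := exists_mem_gap hx
    rcases j.even_or_odd with ⟨k, rfl⟩ | hjo
    · rw [← two_mul] at hxj
      exact ⟨k, by omega, (hg_unique k (by omega) x hxj hx0).symm⟩
    · exact absurd hx0 (hodd j hjm hjo x hxj)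
  · have := eq_of_mem_gap hmono (by omega) (by omega) (hg_mem i hi) (hij ▸ hg_mem j hj)
    omega

end GapZeros

theorem piiF_zero_distribution_general (α : ℝ) (hα : -1/2 < α) (m : ℕ) (hm : 1 ≤ m)
    (p : ℕ → ℝ) (hp : ∀ i j, 1 ≤ i → i < j → j ≤ m → p i < p j)
    (u u' u'' : ℝ → ℝ)
    (hu : ∀ x ∉ poleSet m p, HasDerivAt u (u' x) x)
    (hu' : ∀ x ∉ poleSet m p, HasDerivAt u' (u'' x) x)
    (hPII : ∀ x ∉ poleSet m p, u'' x = 2 * (u x) ^ 3 + x * u x - α)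
    (hfbot : Tendsto (piiF u u') atBot atBot)
    (hftop : Tendsto (piiF u u') atTop atTop)
    (hfodd : ∀ j, 1 ≤ j → j ≤ m → Odd j →
      Tendsto (piiF u u') (𝓝[≠] p j) atTop)
    (hfeven : ∀ j, 1 ≤ j → j ≤ m → Even j →
      Tendsto (fun x => piiF u u' x / (x - p j)) (𝓝[≠] p j)
        (𝓝 (-(2 * α + 1)))) :
    (∃ z, z < p 1 ∧ piiF u u' z = 0 ∧
      ∀ w, w < p 1 → piiF u u' w = 0 → w = z) ∧
    (∀ k, 1 ≤ k → 2 * k ≤ m →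
      ∀ w ∈ Set.Ioo (p (2 * k - 1)) (p (2 * k)), piiF u u' w ≠ 0) ∧
    (∀ k, 1 ≤ k → 2 * k < m →
      ∃ z ∈ Set.Ioo (p (2 * k)) (p (2 * k + 1)), piiF u u' z = 0 ∧
        ∀ w ∈ Set.Ioo (p (2 * k)) (p (2 * k + 1)), piiF u u' w = 0 → w = z) ∧
    (Odd m → ∀ w, p m < w → piiF u u' w ≠ 0) ∧
    (Even m → ∃ z, p m < z ∧ piiF u u' z = 0 ∧
      ∀ w, p m < w → piiF u u' w = 0 → w = z) ∧
    {x | x ∉ poleSet m p ∧ piiF u u' x = 0}.ncard = m / 2 + 1 ∧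
    (∀ z ∉ poleSet m p, piiF u u' z = 0 →
      HasDerivAt (piiF u u') (2 * α + 1) z) := by
  have hc : 0 < 2 * α + 1 := by linarith
  have hmono : StrictMonoOn p (Icc 1 m) := fun i hi j hj hij => hp i j hi.1 hij hj.2
  have hderiv : ∀ x ∉ poleSet m p,
      HasDerivAt (piiF u u') (-2 * u x * piiF u u' x + (2 * α + 1)) x :=
    fun x hx => hasDerivAt_piiF (hu x hx) (hu' x hx) (hPII x hx)
  have hderiv_zero : ∀ z ∉ poleSet m p, piiF u u' z = 0 →
      HasDerivAt (piiF u u') (2 * α + 1) z := fun z hz h0 => by simpa [h0] using hderiv z hz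
  have hf : CrossesZeroUpOn (piiF u u') (poleSet m p)ᶜ :=
    ⟨fun x hx => (hderiv x hx).continuousAt.continuousWithinAt,
      fun z hz h0 => ⟨_, hc, hderiv_zero z hz h0⟩⟩
  have hpos : ∀ j, 1 ≤ j → j ≤ m → Odd j → ∀ᶠ x in 𝓝[≠] p j, 0 < piiF u u' x :=
    fun j h1 h2 h3 => (hfodd j h1 h2 h3).eventually_gt_atTop 0
  have hneg : ∀ j, 1 ≤ j → j ≤ m → Even j → ∀ᶠ x in 𝓝[>] p j, piiF u u' x < 0 :=
    fun j h1 h2 h3 => eventually_neg_nhdsGT_of_tendsto_div (hfeven j h1 h2 h3) (by linarith)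
  have hodd : ∀ j ≤ m, Odd j → ∀ w ∈ gap m p j, piiF u u' w ≠ 0 := fun j hj hjo w hw =>
    (pos_of_mem_gap hmono.monotoneOn hf hjo.pos hj
      ((hpos j hjo.pos hj hjo).filter_mono (nhdsGT_le_nhdsNE _)) w hw).ne'
  have heven := fun j (hj : j ≤ m) (hje : Even j) =>
    exists_unique_zero_mem_gap hmono hf hfbot hftop hpos hneg hj hje
  refine ⟨?_, ?_, ?_, ?_, ?_, ncard_setOf_zero_eq hmono.monotoneOn hodd heven, hderiv_zero⟩
  · simpa only [gap_zero hm, mem_Iio] using heven 0 (Nat.zero_le m) ⟨0, rfl⟩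
  · intro k hk hkm
    have h := hodd (2 * k - 1) (by omega) ⟨k - 1, by omega⟩
    rwa [gap_of_lt (by omega) (by omega), Nat.sub_add_cancel (by omega)] at h
  · intro k hk hkm
    simpa only [gap_of_lt (by omega : 1 ≤ 2 * k) hkm] using heven (2 * k) hkm.le (even_two_mul k)
  · intro hmo
    simpa only [gap_self hm, mem_Ioi] using hodd m le_rfl hmo
  · intro hme
    simpa only [gap_self hm, mem_Ioi] using heven m le_rfl hme

/-- induction step for Theorems 1.1 and 1.2: let `α > -1/2`
and let `u` solve Painlevé II with parameter `α` on `ℝ ∖ {p 1, …, p m}`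
(`p 1 < ⋯ < p m`, `m ≥ 1`) with alternating simple poles of residues
`(-1)^{j+1}` (so residue `+1` at `p 1`).  Assume `f = 2 u^2 - 2 u' + x`
tends to `-∞` at `-∞`, to `+∞` at `+∞`, to `+∞` at each odd-indexed pole,
and satisfies `f(x)/(x - p j) → -(2α+1)` at each even-indexed pole.  Then
the zeros of `f` off the pole set are: exactly one in `(-∞, p 1)`; none in
each `(p (2k-1), p (2k))`; exactly one in each `(p (2k), p (2k+1))`; and,
beyond `p m`, none if `m` is odd and exactly one if `m` is even.  In total
`f` has exactly `⌊m/2⌋ + 1` such zeros, each with `f' = 2α + 1`. -/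
theorem piiF_zero_distribution (α : ℝ) (hα : -1/2 < α) (m : ℕ) (hm : 1 ≤ m)
    (p : ℕ → ℝ) (hp : ∀ i j, 1 ≤ i → i < j → j ≤ m → p i < p j)
    (u u' u'' : ℝ → ℝ)
    (hu : ∀ x ∉ poleSet m p, HasDerivAt u (u' x) x)
    (hu' : ∀ x ∉ poleSet m p, HasDerivAt u' (u'' x) x)
    (hPII : ∀ x ∉ poleSet m p, u'' x = 2 * (u x) ^ 3 + x * u x - α)
    (hpoles : ∀ j, 1 ≤ j → j ≤ m →
      Tendsto (fun x => (x - p j) * u x) (𝓝[≠] p j) (𝓝 ((-1 : ℝ) ^ (j + 1))))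
    (hfbot : Tendsto (piiF u u') atBot atBot)
    (hftop : Tendsto (piiF u u') atTop atTop)
    (hfodd : ∀ j, 1 ≤ j → j ≤ m → Odd j →
      Tendsto (piiF u u') (𝓝[≠] p j) atTop)
    (hfeven : ∀ j, 1 ≤ j → j ≤ m → Even j →
      Tendsto (fun x => piiF u u' x / (x - p j)) (𝓝[≠] p j)
        (𝓝 (-(2 * α + 1)))) :
    (∃ z, z < p 1 ∧ piiF u u' z = 0 ∧
      ∀ w, w < p 1 → piiF u u' w = 0 → w = z) ∧
    (∀ k, 1 ≤ k → 2 * k ≤ m →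
      ∀ w ∈ Set.Ioo (p (2 * k - 1)) (p (2 * k)), piiF u u' w ≠ 0) ∧
    (∀ k, 1 ≤ k → 2 * k < m →
      ∃ z ∈ Set.Ioo (p (2 * k)) (p (2 * k + 1)), piiF u u' z = 0 ∧
        ∀ w ∈ Set.Ioo (p (2 * k)) (p (2 * k + 1)), piiF u u' w = 0 → w = z) ∧
    (Odd m → ∀ w, p m < w → piiF u u' w ≠ 0) ∧
    (Even m → ∃ z, p m < z ∧ piiF u u' z = 0 ∧
      ∀ w, p m < w → piiF u u' w = 0 → w = z) ∧
    {x | x ∉ poleSet m p ∧ piiF u u' x = 0}.ncard = m / 2 + 1 ∧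
    (∀ z ∉ poleSet m p, piiF u u' z = 0 →
      HasDerivAt (piiF u u') (2 * α + 1) z) :=
  piiF_zero_distribution_general α hα m hm p hp u u' u'' hu hu' hPII hfbot hftop hfodd hfeven
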